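/- Let k = 𝔽_q with q odd and let G = ψ(GL₄(k)) act on the right on k⁶ (lexicographic exterior-square coordinates). Every vector of the form (0,0,s,0,t,u) with (s,t,u) ≠ 0 spans a line equivalent under G to the line spanned by (0,0,0,0,0,1). -/

import Mathlib

/-!
The vector `(0,0,s,0,t,u)` is the decomposable bivector `w ∧ e₄` with `w = (s,t,u,0)`, and `ψ(A)`
acts on decomposable bivectors by `x ∧ y ↦ xA ∧ yA`. Since `w` and `e₄` are linearly independent,
some `A ∈ GL₄(k)` fixes `e₄` and sends `w` to `e₃`, hence sends `w ∧ e₄` to `e₃ ∧ e₄ = (0,0,0,0,0,1)`.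
-/

open Matrix

def lexPair : Fin 6 → Fin 4 × Fin 4 := ![(0,1),(0,2),(0,3),(1,2),(1,3),(2,3)]

/-- The exterior square representation `ψ : GL₄ → GL₆` in matrix form. -/
def extSq {k : Type*} [CommRing k] (A : Matrix (Fin 4) (Fin 4) k) :
    Matrix (Fin 6) (Fin 6) k :=
  Matrix.of fun rs ij =>
    A (lexPair rs).1 (lexPair ij).1 * A (lexPair rs).2 (lexPair ij).2 -
      A (lexPair rs).2 (lexPair ij).1 * A (lexPair rs).1 (lexPair ij).2

section Wedge

variable {k : Type*}

/-- The bivector `x ∧ y` in the coordinates of `extSq`. -/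
def wedge [CommRing k] (x y : Fin 4 → k) : Fin 6 → k :=
  fun p => x (lexPair p).1 * y (lexPair p).2 - x (lexPair p).2 * y (lexPair p).1

theorem wedge_vecMul_extSq [CommRing k] (x y : Fin 4 → k) (A : Matrix (Fin 4) (Fin 4) k) :
    wedge x y ᵥ* extSq A = wedge (x ᵥ* A) (y ᵥ* A) := by
  funext p
  simp only [wedge, extSq, vecMul, dotProduct, Fin.sum_univ_succ, Fin.sum_univ_zero]
  fin_cases p <;> simp [lexPair] <;> ring

theorem wedge_vec_e4 [CommRing k] (s t u : k) :
    wedge ![s, t, u, 0] ![0, 0, 0, 1] = ![0, 0, s, 0, t, u] := by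
  funext p
  fin_cases p <;> simp [wedge, lexPair]

theorem wedge_e3_e4 [CommRing k] :
    wedge ![0, 0, 1, 0] ![0, 0, 0, 1] = (![0, 0, 0, 0, 0, 1] : Fin 6 → k) := by
  funext p
  fin_cases p <;> simp [wedge, lexPair]

theorem exists_isUnit_det_vecMul_eq [Field k] {s t u : k} (h : ¬(s = 0 ∧ t = 0 ∧ u = 0)) :
    ∃ A : Matrix (Fin 4) (Fin 4) k, IsUnit A.det ∧
      ![s, t, u, 0] ᵥ* A = ![0, 0, 1, 0] ∧ ![0, 0, 0, 1] ᵥ* A = ![0, 0, 0, 1] := by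
  by_cases hu : u = 0
  · by_cases ht : t = 0
    · have hs : s ≠ 0 := fun hs => h ⟨hs, ht, hu⟩
      refine ⟨!![0, 0, 1/s, 0; 1, 0, 0, 0; 0, 1, 0, 0; 0, 0, 0, 1], ?_, ?_, ?_⟩
      · simp [det_succ_row_zero, Fin.sum_univ_succ, Fin.succAbove, hs]
      all_goals simp [hu, ht, hs]
    · refine ⟨!![1, 0, 0, 0; -s/t, 0, 1/t, 0; 0, 1, 0, 0; 0, 0, 0, 1], ?_, ?_, ?_⟩
      · simp [det_succ_row_zero, Fin.sum_univ_succ, Fin.succAbove, ht]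
      all_goals simp [hu, ht, mul_div_cancel₀]
  · refine ⟨!![1, 0, 0, 0; 0, 1, 0, 0; -s/u, -t/u, 1/u, 0; 0, 0, 0, 1], ?_, ?_, ?_⟩
    · simp [det_succ_row_zero, Fin.sum_univ_succ, Fin.succAbove, hu]
    all_goals simp [hu, mul_div_cancel₀]

end Wedge

theorem middle_zero_vectors_in_decomposable_orbit_general
    {k : Type*} [Field k]
    (s t u : k) (h : ¬(s = 0 ∧ t = 0 ∧ u = 0)) :
    ∃ A : Matrix (Fin 4) (Fin 4) k, IsUnit A.det ∧ ∃ c : k, c ≠ 0 ∧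
      Matrix.vecMul ![0, 0, s, 0, t, u] (extSq A) = c • ![0, 0, 0, 0, 0, 1] := by
  obtain ⟨A, hA, hw, he⟩ := exists_isUnit_det_vecMul_eq h
  refine ⟨A, hA, 1, one_ne_zero, ?_⟩
  rw [← wedge_vec_e4, wedge_vecMul_extSq, hw, he, wedge_e3_e4, one_smul]

/-- over a finite field of odd order, every vector of the form
`(0,0,s,0,t,u) ≠ 0` spans a line equivalent under the right action of
`ψ(GL₄(k))` to the line spanned by `(0,0,0,0,0,1)`. -/
theorem middle_zero_vectors_in_decomposable_orbit
    {k : Type*} [Field k] [Fintype k] (hodd : Odd (Fintype.card k))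
    (s t u : k) (h : ¬(s = 0 ∧ t = 0 ∧ u = 0)) :
    ∃ A : Matrix (Fin 4) (Fin 4) k, IsUnit A.det ∧ ∃ c : k, c ≠ 0 ∧
      Matrix.vecMul ![0, 0, s, 0, t, u] (extSq A) = c • ![0, 0, 0, 0, 0, 1] :=
  middle_zero_vectors_in_decomposable_orbit_general s t u h
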